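/- Let d ≥ 1. In the distance-d AGP logical measurement procedure there are 2d error locations, indexed by pairs (j,k) with j ∈ {1,…,d} and k ∈ {0,1}, where both errors (j,0) (a data error before the j-th LM component) and (j,1) (a measurement error in the j-th LM component) flip exactly the j-th logical measurement outcome m_j. For an error vector e ∈ 𝔽₂^{2d}, define the flip vector f ∈ 𝔽₂^d by f(j) = e(j,0) + e(j,1). If e violates no detector, i.e. f(j) + f(j+1) = 0 for every j ∈ {1,…,d−1}, and e flips the observable, i.e. f(d) = 1, then the Hamming weight of e is at least d. That is, in the AGP procedure it takes at least d = 2t+1 errors to flip the observable without violating any detectors. -/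

import Mathlib

/-!
Each detector says that two consecutive flips `f j = e (j,0) + e (j,1)` agree, so the flips
are constant along the chain and the observable forces all of them to be `1`. Then every
round `j` carries a nonzero error `e (j,k)`, and distinct rounds give distinct error locations.
-/

theorem Fin.apply_eq_apply_of_forall_apply_eq_apply_succ {d : ℕ} {α : Type*} (f : Fin d → α)
    (h : ∀ i : ℕ, ∀ hi : i + 1 < d, f ⟨i, Nat.lt_of_succ_lt hi⟩ = f ⟨i + 1, hi⟩) (i j : Fin d) :
    f i = f j := by
  have eq_first : ∀ n : ℕ, ∀ hn : n < d, f ⟨n, hn⟩ = f ⟨0, by omega⟩ := by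
    intro n
    induction n with
    | zero => exact fun _ => rfl
    | succ n ih => exact fun hn => (h n hn).symm.trans (ih (by omega))
  exact (eq_first i i.isLt).trans (eq_first j j.isLt).symm

theorem card_le_hammingNorm_of_forall_exists_ne_zero {α β γ : Type*} [Fintype α] [Fintype β]
    [DecidableEq α] [Zero γ] [DecidableEq γ] (e : α × β → γ) (he : ∀ a, ∃ b, e (a, b) ≠ 0) :
    Fintype.card α ≤ hammingNorm e := by
  have hfst : (Finset.univ.filter fun x => e x ≠ 0).image Prod.fst = Finset.univ := by
    ext a
    obtain ⟨b, hb⟩ := he a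
    simpa using ⟨b, hb⟩
  calc Fintype.card α = ((Finset.univ.filter fun x => e x ≠ 0).image Prod.fst).card := by
        rw [hfst, Finset.card_univ]
    _ ≤ hammingNorm e := Finset.card_image_le

/-- In the distance-`d` AGP logical measurement procedure, any error vector
(on the `2d` error locations, where errors `(j,0)` and `(j,1)` both flip
exactly the `j`-th logical measurement outcome) that violates no detector and
flips the observable has Hamming weight at least `d`. -/
theorem agp_procedure_lower_bound {d : ℕ} (hd : 1 ≤ d)
    (e : Fin d × Fin 2 → ZMod 2)
    (hdet : ∀ i : ℕ, ∀ h : i + 1 < d,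
      (e (⟨i, by omega⟩, 0) + e (⟨i, by omega⟩, 1)) +
        (e (⟨i + 1, h⟩, 0) + e (⟨i + 1, h⟩, 1)) = 0)
    (hobs : e (⟨d - 1, by omega⟩, 0) + e (⟨d - 1, by omega⟩, 1) = 1) :
    d ≤ hammingNorm e := by
  set f : Fin d → ZMod 2 := fun j => e (j, 0) + e (j, 1)
  have flip_const := Fin.apply_eq_apply_of_forall_apply_eq_apply_succ f
    fun i hi => CharTwo.add_eq_zero.mp (hdet i hi)
  have flip_eq_one (j : Fin d) : f j = 1 := (flip_const j _).trans hobs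
  have round_ne_zero (j : Fin d) : ∃ k, e (j, k) ≠ 0 := by
    by_contra! hzero
    simpa [f, hzero] using flip_eq_one j
  simpa using card_le_hammingNorm_of_forall_exists_ne_zero e round_ne_zero
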